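/- arXiv:1911.09097 — 3 statements merged into one kernel-verified Lean document; each statement's English description precedes it below -/
import Mathlib

section
/- Under the Dirac dual ψ̄ = ψ†γ0, the opposite-helicity Dirac inner products of the boosted Elko spinors are purely imaginary: λ̄^S_{-,+} · λ^S_{+,-} = 2·i·m, λ̄^S_{+,-} · λ^S_{-,+} = -2·i·m, λ̄^A_{-,+} · λ^A_{+,-} = -2·i·m, and λ̄^A_{+,-} · λ^A_{-,+} = 2·i·m. -/
open Matrix Complex

noncomputable section

/-- Pauli matrices -/
def σ1 : Matrix (Fin 2) (Fin 2) ℂ := !![0, 1; 1, 0]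
def σ2 : Matrix (Fin 2) (Fin 2) ℂ := !![0, -I; I, 0]
def σ3 : Matrix (Fin 2) (Fin 2) ℂ := !![1, 0; 0, -1]

/-- Dirac matrices in the Weyl representation, blocks [[0,1],[1,0]], [[0,σk],[-σk,0]] -/
def γ0 : Matrix (Fin 4) (Fin 4) ℂ := !![0,0,1,0; 0,0,0,1; 1,0,0,0; 0,1,0,0]
def γ1 : Matrix (Fin 4) (Fin 4) ℂ := !![0,0,0,1; 0,0,1,0; 0,-1,0,0; -1,0,0,0]
def γ2 : Matrix (Fin 4) (Fin 4) ℂ := !![0,0,0,-I; 0,0,I,0; 0,I,0,0; -I,0,0,0]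
def γ3 : Matrix (Fin 4) (Fin 4) ℂ := !![0,0,1,0; 0,0,0,-1; -1,0,0,0; 0,1,0,0]

/-- the energy E = sqrt(p² + m²) -/
def Ee (m p : ℝ) : ℝ := Real.sqrt (p^2 + m^2)
/-- boost factors B± = sqrt((E+m)/2)(1 ± p/(E+m)) -/
def Bp (m p : ℝ) : ℝ := Real.sqrt ((Ee m p + m)/2) * (1 + p/(Ee m p + m))
def Bm (m p : ℝ) : ℝ := Real.sqrt ((Ee m p + m)/2) * (1 - p/(Ee m p + m))

/-- e^{iφ/2}, e^{-iφ/2}, e^{iφ}, e^{-iφ} -/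
def eP (φ : ℝ) : ℂ := Complex.exp (I * (φ:ℂ) / 2)
def eM (φ : ℝ) : ℂ := Complex.exp (-(I * (φ:ℂ)) / 2)
def ePf (φ : ℝ) : ℂ := Complex.exp (I * (φ:ℂ))
def eMf (φ : ℝ) : ℂ := Complex.exp (-(I * (φ:ℂ)))

/-- boosted Elko spinors -/
def lamS₁ (m p θ φ : ℝ) : Fin 4 → ℂ :=
  ((Bm m p : ℝ) : ℂ) • ![ -I * (Real.sin (θ/2) : ℂ) * eM φ,
                           I * (Real.cos (θ/2) : ℂ) * eP φ,
                           (Real.cos (θ/2) : ℂ) * eM φ,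
                           (Real.sin (θ/2) : ℂ) * eP φ ]

def lamS₂ (m p θ φ : ℝ) : Fin 4 → ℂ :=
  ((Bp m p : ℝ) : ℂ) • ![ I * (Real.cos (θ/2) : ℂ) * eM φ,
                           I * (Real.sin (θ/2) : ℂ) * eP φ,
                           (Real.sin (θ/2) : ℂ) * eM φ,
                           -(Real.cos (θ/2) : ℂ) * eP φ ]

def lamA₁ (m p θ φ : ℝ) : Fin 4 → ℂ :=
  ((Bm m p : ℝ) : ℂ) • ![ I * (Real.sin (θ/2) : ℂ) * eM φ,
                           -I * (Real.cos (θ/2) : ℂ) * eP φ,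
                           (Real.cos (θ/2) : ℂ) * eM φ,
                           (Real.sin (θ/2) : ℂ) * eP φ ]

def lamA₂ (m p θ φ : ℝ) : Fin 4 → ℂ :=
  ((Bp m p : ℝ) : ℂ) • ![ -I * (Real.cos (θ/2) : ℂ) * eM φ,
                           -I * (Real.sin (θ/2) : ℂ) * eP φ,
                           (Real.sin (θ/2) : ℂ) * eM φ,
                           -(Real.cos (θ/2) : ℂ) * eP φ ]

/-- the Ξ(p) operator -/
def Ξop (m p θ φ : ℝ) : Matrix (Fin 4) (Fin 4) ℂ :=
  (1/(m:ℂ)) •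
    !![ I * ((p * Real.sin θ : ℝ) : ℂ),
        -I * ((Ee m p + p * Real.cos θ : ℝ) : ℂ) * eMf φ, 0, 0;
        I * ((Ee m p - p * Real.cos θ : ℝ) : ℂ) * ePf φ,
        -I * ((p * Real.sin θ : ℝ) : ℂ), 0, 0;
        0, 0, -I * ((p * Real.sin θ : ℝ) : ℂ),
        -I * ((Ee m p - p * Real.cos θ : ℝ) : ℂ) * eMf φ;
        0, 0, I * ((Ee m p + p * Real.cos θ : ℝ) : ℂ) * ePf φ,
        I * ((p * Real.sin θ : ℝ) : ℂ) ]

/-- the G(φ) matrix appearing in the Elko spin sums -/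
def Gmat (φ : ℝ) : Matrix (Fin 4) (Fin 4) ℂ :=
  !![0, 0, 0, -I * eMf φ;
     0, 0, I * ePf φ, 0;
     0, -I * eMf φ, 0, 0;
     I * ePf φ, 0, 0, 0]

/-- momentum slash pslash = E γ0 + p sinθ cosφ γ1 + p sinθ sinφ γ2 + p cosθ γ3 -/
def pslash (m p θ φ : ℝ) : Matrix (Fin 4) (Fin 4) ℂ :=
  ((Ee m p : ℝ) : ℂ) • γ0 + ((p * Real.sin θ * Real.cos φ : ℝ) : ℂ) • γ1
    + ((p * Real.sin θ * Real.sin φ : ℝ) : ℂ) • γ2 + ((p * Real.cos θ : ℝ) : ℂ) • γ3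

/-- Elko dual rows ¬λ -/
def dS₁ (m p θ φ : ℝ) : Fin 4 → ℂ := I • Matrix.vecMul (star (lamS₂ m p θ φ)) γ0
def dS₂ (m p θ φ : ℝ) : Fin 4 → ℂ := (-I) • Matrix.vecMul (star (lamS₁ m p θ φ)) γ0
def dA₁ (m p θ φ : ℝ) : Fin 4 → ℂ := I • Matrix.vecMul (star (lamA₂ m p θ φ)) γ0
def dA₂ (m p θ φ : ℝ) : Fin 4 → ℂ := (-I) • Matrix.vecMul (star (lamA₁ m p θ φ)) γ0

end

/-- the Dirac-dual pairing ψ̄χ = ψ†γ0 χ -/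
noncomputable def diracPair (ψ χ : Fin 4 → ℂ) : ℂ :=
  dotProduct (Matrix.vecMul (star ψ) γ0) χ


/-!
The antisymmetric spinors are the symmetric ones multiplied by γ⁵, and since γ⁵ is Hermitian and
anticommutes with γ⁰ this flips the sign of the Dirac pairing; swapping the two arguments conjugates
the pairing because γ⁰ is Hermitian. So only λ̄^S_{-,+} λ^S_{+,-} has to be computed, and it equals
B₋B₊ · 2i (sin²(θ/2) + cos²(θ/2)) = 2im, since B₋B₊ = ((E+m)² - p²) / (2(E+m)) = m.
-/

open ComplexConjugate

/-- γ⁵ = iγ⁰γ¹γ²γ³, which is diagonal in the Weyl representation. -/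
def γ5 : Matrix (Fin 4) (Fin 4) ℂ := Matrix.diagonal ![-1, -1, 1, 1]

lemma diracPair_eq (ψ χ : Fin 4 → ℂ) :
    diracPair ψ χ = star (ψ 0) * χ 2 + star (ψ 1) * χ 3 + star (ψ 2) * χ 0 + star (ψ 3) * χ 1 := by
  simp [diracPair, dotProduct, vecMul, γ0, Fin.sum_univ_four]
  ring

lemma diracPair_swap (ψ χ : Fin 4 → ℂ) : diracPair χ ψ = conj (diracPair ψ χ) := by
  simp only [diracPair_eq, map_add, map_mul, star_def, conj_conj]
  ring

lemma diracPair_γ5_mulVec (ψ χ : Fin 4 → ℂ) :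
    diracPair (γ5 *ᵥ ψ) (γ5 *ᵥ χ) = -diracPair ψ χ := by
  simp [diracPair_eq, γ5, mulVec_diagonal]
  ring

lemma lamA₁_eq_γ5_mulVec (m p θ φ : ℝ) : lamA₁ m p θ φ = γ5 *ᵥ lamS₁ m p θ φ := by
  ext i; fin_cases i <;> simp [lamA₁, lamS₁, γ5, mulVec_diagonal]

lemma lamA₂_eq_γ5_mulVec (m p θ φ : ℝ) : lamA₂ m p θ φ = γ5 *ᵥ lamS₂ m p θ φ := by
  ext i; fin_cases i <;> simp [lamA₂, lamS₂, γ5, mulVec_diagonal]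

lemma Bm_mul_Bp {m : ℝ} (hm : 0 < m) (p : ℝ) : Bm m p * Bp m p = m := by
  have hE : 0 ≤ Ee m p := Real.sqrt_nonneg _
  have hE2 : Ee m p ^ 2 = p ^ 2 + m ^ 2 := Real.sq_sqrt (by positivity)
  have hEm : Ee m p + m ≠ 0 := by positivity
  have hsq : Real.sqrt ((Ee m p + m) / 2) ^ 2 = (Ee m p + m) / 2 := Real.sq_sqrt (by positivity)
  calc Bm m p * Bp m p
      = Real.sqrt ((Ee m p + m) / 2) ^ 2 * (1 - (p / (Ee m p + m)) ^ 2) := by rw [Bm, Bp]; ring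
    _ = ((Ee m p + m) ^ 2 - p ^ 2) / (2 * (Ee m p + m)) := by rw [hsq]; field_simp
    _ = m := by rw [div_eq_iff (by positivity)]; linear_combination hE2

lemma conj_eM (φ : ℝ) : conj (eM φ) = eP φ := by
  rw [eM, eP, ← exp_conj]
  simp [map_div₀, map_ofNat]

lemma conj_eP (φ : ℝ) : conj (eP φ) = eM φ := by
  rw [← conj_eM, conj_conj]

lemma eP_mul_eM (φ : ℝ) : eP φ * eM φ = 1 := by
  rw [eP, eM, ← exp_add, neg_div, add_neg_cancel, exp_zero]

lemma diracPair_lamS₁_lamS₂ {m : ℝ} (hm : 0 < m) (p θ φ : ℝ) :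
    diracPair (lamS₁ m p θ φ) (lamS₂ m p θ φ) = 2 * I * m := by
  have hB : (Bm m p : ℂ) * Bp m p = m := by exact_mod_cast Bm_mul_Bp hm p
  have hsc : (Real.sin (θ / 2) : ℂ) ^ 2 + (Real.cos (θ / 2) : ℂ) ^ 2 = 1 := by
    exact_mod_cast Real.sin_sq_add_cos_sq (θ / 2)
  have he := eP_mul_eM φ
  simp only [diracPair_eq, lamS₁, lamS₂, Pi.smul_apply, smul_eq_mul, cons_val_zero, cons_val_one,
    cons_val_two, cons_val_three, head_cons, tail_cons, star_mul', star_def, conj_ofReal, conj_I,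
    conj_eM, conj_eP, map_neg]
  linear_combination
    (2 * I * (eP φ * eM φ) * ((Real.sin (θ / 2) : ℂ) ^ 2 + (Real.cos (θ / 2) : ℂ) ^ 2)) * hB
      + (2 * I * m * (eP φ * eM φ)) * hsc + (2 * I * m) * he

theorem elko_dirac_cross_products_imaginary_general (m p θ φ : ℝ) (hm : 0 < m) :
    diracPair (lamS₁ m p θ φ) (lamS₂ m p θ φ) = 2 * I * (m : ℂ) ∧
    diracPair (lamS₂ m p θ φ) (lamS₁ m p θ φ) = -(2 * I * (m : ℂ)) ∧
    diracPair (lamA₁ m p θ φ) (lamA₂ m p θ φ) = -(2 * I * (m : ℂ)) ∧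
    diracPair (lamA₂ m p θ φ) (lamA₁ m p θ φ) = 2 * I * (m : ℂ) := by
  have hS₁₂ := diracPair_lamS₁_lamS₂ hm p θ φ
  have hS₂₁ : diracPair (lamS₂ m p θ φ) (lamS₁ m p θ φ) = -(2 * I * m) := by
    rw [diracPair_swap, hS₁₂]
    simp [map_ofNat]
  refine ⟨hS₁₂, hS₂₁, ?_, ?_⟩
  · rw [lamA₁_eq_γ5_mulVec, lamA₂_eq_γ5_mulVec, diracPair_γ5_mulVec, hS₁₂]
  · rw [lamA₁_eq_γ5_mulVec, lamA₂_eq_γ5_mulVec, diracPair_γ5_mulVec, hS₂₁, neg_neg]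

/-- Under the Dirac dual, the opposite-helicity Dirac inner products of the boosted Elko
spinors are purely imaginary: ±2im. -/
theorem elko_dirac_cross_products_imaginary (m p θ φ : ℝ) (hm : 0 < m) (hp : 0 ≤ p) :
    diracPair (lamS₁ m p θ φ) (lamS₂ m p θ φ) = 2 * I * (m : ℂ) ∧
    diracPair (lamS₂ m p θ φ) (lamS₁ m p θ φ) = -(2 * I * (m : ℂ)) ∧
    diracPair (lamA₁ m p θ φ) (lamA₂ m p θ φ) = -(2 * I * (m : ℂ)) ∧
    diracPair (lamA₂ m p θ φ) (lamA₁ m p θ φ) = 2 * I * (m : ℂ) :=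
  elko_dirac_cross_products_imaginary_general m p θ φ hm
end

section
/- Under the Elko dual structure the boosted Elko spinors obey the orthonormality relations: ¬λ^S_α · λ^S_{α'} = 2m·δ_{αα'} and ¬λ^A_α · λ^A_{α'} = -2m·δ_{αα'} for α, α' ∈ {(-,+), (+,-)}, and all mixed products vanish: ¬λ^S_α · λ^A_{α'} = 0 and ¬λ^A_α · λ^S_{α'} = 0 for all α, α'. -/
open Matrix Complex

/-!
Each boosted Elko spinor is `B • (ζ Θ χ*, χ)` with `ζ = ±i`, `χ` one of the helicity spinors
`χ₊ = (c e^{-iφ/2}, s e^{iφ/2})`, `χ₋ = (s e^{-iφ/2}, -c e^{iφ/2})`, and `B = B∓`. For two spinors of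
this shape the pairing `u† γ0 v` only sees the antisymmetric product `ε(χ, ψ) = χᵀ Θ ψ`, which is
`0` for equal helicities and `∓1` for opposite ones (`s² + c² = 1`, `|e^{iφ/2}| = 1`). The Elko
dual pairs opposite helicities, and `B₊ B₋ = m`, so the products come out as `±2m` when the
phases `ζ` agree and cancel when they differ.
-/

lemma Bp_mul_Bm {m : ℝ} (hm : 0 < m) (p : ℝ) : Bp m p * Bm m p = m := by
  have hE : Ee m p ^ 2 = p ^ 2 + m ^ 2 := Real.sq_sqrt (by positivity)
  have hEm : 0 < Ee m p + m := by unfold Ee; positivity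
  have hS : Real.sqrt ((Ee m p + m) / 2) ^ 2 = (Ee m p + m) / 2 := Real.sq_sqrt (by positivity)
  unfold Bp Bm
  field_simp
  nlinarith [hS, hE]

lemma star_eP (φ : ℝ) : star (eP φ) = eM φ := by
  rw [eP, eM, star_def, ← Complex.exp_conj]
  simp [neg_div, map_ofNat]

lemma star_eM (φ : ℝ) : star (eM φ) = eP φ := by
  rw [← star_eP, star_star]

lemma eM_mul_eP (φ : ℝ) : eM φ * eP φ = 1 := by
  rw [eP, eM, ← Complex.exp_add, neg_div, neg_add_cancel, Complex.exp_zero]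

noncomputable def helicityPlus (θ φ : ℝ) : Fin 2 → ℂ :=
  ![(Real.cos (θ/2) : ℂ) * eM φ, (Real.sin (θ/2) : ℂ) * eP φ]

noncomputable def helicityMinus (θ φ : ℝ) : Fin 2 → ℂ :=
  ![(Real.sin (θ/2) : ℂ) * eM φ, -(Real.cos (θ/2) : ℂ) * eP φ]

/-- The antisymmetric product `χᵀ Θ ψ`, where `Θ = -iσ2` is Wigner's time-reversal operator. -/
def spinorProduct (χ ψ : Fin 2 → ℂ) : ℂ := χ 1 * ψ 0 - χ 0 * ψ 1

lemma spinorProduct_self (χ : Fin 2 → ℂ) : spinorProduct χ χ = 0 := by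
  rw [spinorProduct, mul_comm, sub_self]

lemma spinorProduct_swap (χ ψ : Fin 2 → ℂ) : spinorProduct ψ χ = -spinorProduct χ ψ := by
  unfold spinorProduct; ring

lemma spinorProduct_helicityMinus_helicityPlus (θ φ : ℝ) :
    spinorProduct (helicityMinus θ φ) (helicityPlus θ φ) = -1 := by
  have hsc : (Real.sin (θ/2) : ℂ) ^ 2 + (Real.cos (θ/2) : ℂ) ^ 2 = 1 := by
    exact_mod_cast Real.sin_sq_add_cos_sq (θ/2)
  simp only [spinorProduct, helicityMinus, helicityPlus, cons_val_zero, cons_val_one]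
  linear_combination (-(eM φ * eP φ)) * hsc - eM_mul_eP φ

lemma spinorProduct_helicityPlus_helicityMinus (θ φ : ℝ) :
    spinorProduct (helicityPlus θ φ) (helicityMinus θ φ) = 1 := by
  rw [spinorProduct_swap, spinorProduct_helicityMinus_helicityPlus, neg_neg]

/-- The four-spinor `(ζ Θ χ*, χ)`; `ζ = i` gives the self-conjugate and `ζ = -i` the
anti-self-conjugate Elko spinors. -/
def elkoSpinor (ζ : ℂ) (χ : Fin 2 → ℂ) : Fin 4 → ℂ :=
  ![-ζ * star (χ 1), ζ * star (χ 0), χ 0, χ 1]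

lemma vecMul_star_γ0_dotProduct_elkoSpinor (ζ ζ' : ℂ) (χ ψ : Fin 2 → ℂ) :
    vecMul (star (elkoSpinor ζ χ)) γ0 ⬝ᵥ elkoSpinor ζ' ψ
      = ζ' * star (spinorProduct χ ψ) - star ζ * spinorProduct χ ψ := by
  simp [elkoSpinor, spinorProduct, γ0, vecMul, dotProduct, Fin.sum_univ_four]
  ring

lemma smul_vecMul_star_smul_dotProduct {n : ℕ} (c : ℂ) (b b' : ℝ) (u v : Fin n → ℂ)
    (A : Matrix (Fin n) (Fin n) ℂ) :
    (c • vecMul (star ((b : ℂ) • u)) A) ⬝ᵥ ((b' : ℂ) • v)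
      = c * ((b * b' : ℝ) : ℂ) * (vecMul (star u) A ⬝ᵥ v) := by
  simp only [star_smul, Complex.star_def, conj_ofReal, smul_vecMul, smul_dotProduct,
    dotProduct_smul, smul_eq_mul, ofReal_mul]
  ring

lemma lamS₁_eq (m p θ φ : ℝ) : lamS₁ m p θ φ = (Bm m p : ℂ) • elkoSpinor I (helicityPlus θ φ) := by
  rw [lamS₁, elkoSpinor]
  congr 1
  ext i; fin_cases i <;> simp [helicityPlus, star_eP, star_eM, -ofReal_sin, -ofReal_cos] <;> ring

lemma lamS₂_eq (m p θ φ : ℝ) : lamS₂ m p θ φ = (Bp m p : ℂ) • elkoSpinor I (helicityMinus θ φ) := by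
  rw [lamS₂, elkoSpinor]
  congr 1
  ext i; fin_cases i <;> simp [helicityMinus, star_eP, star_eM, -ofReal_sin, -ofReal_cos] <;> ring

lemma lamA₁_eq (m p θ φ : ℝ) :
    lamA₁ m p θ φ = (Bm m p : ℂ) • elkoSpinor (-I) (helicityPlus θ φ) := by
  rw [lamA₁, elkoSpinor]
  congr 1
  ext i; fin_cases i <;> simp [helicityPlus, star_eP, star_eM, -ofReal_sin, -ofReal_cos] <;> ring

lemma lamA₂_eq (m p θ φ : ℝ) :
    lamA₂ m p θ φ = (Bp m p : ℂ) • elkoSpinor (-I) (helicityMinus θ φ) := by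
  rw [lamA₂, elkoSpinor]
  congr 1
  ext i; fin_cases i <;> simp [helicityMinus, star_eP, star_eM, -ofReal_sin, -ofReal_cos] <;> ring

theorem elko_orthonormality_general (m p θ φ : ℝ) (hm : 0 < m) :
    -- self-conjugate sector
    dotProduct (dS₁ m p θ φ) (lamS₁ m p θ φ) = 2 * (m : ℂ) ∧
    dotProduct (dS₂ m p θ φ) (lamS₂ m p θ φ) = 2 * (m : ℂ) ∧
    dotProduct (dS₁ m p θ φ) (lamS₂ m p θ φ) = 0 ∧
    dotProduct (dS₂ m p θ φ) (lamS₁ m p θ φ) = 0 ∧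
    -- anti-self-conjugate sector
    dotProduct (dA₁ m p θ φ) (lamA₁ m p θ φ) = -(2 * (m : ℂ)) ∧
    dotProduct (dA₂ m p θ φ) (lamA₂ m p θ φ) = -(2 * (m : ℂ)) ∧
    dotProduct (dA₁ m p θ φ) (lamA₂ m p θ φ) = 0 ∧
    dotProduct (dA₂ m p θ φ) (lamA₁ m p θ φ) = 0 ∧
    -- mixed products all vanish
    dotProduct (dS₁ m p θ φ) (lamA₁ m p θ φ) = 0 ∧
    dotProduct (dS₁ m p θ φ) (lamA₂ m p θ φ) = 0 ∧
    dotProduct (dS₂ m p θ φ) (lamA₁ m p θ φ) = 0 ∧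
    dotProduct (dS₂ m p θ φ) (lamA₂ m p θ φ) = 0 ∧
    dotProduct (dA₁ m p θ φ) (lamS₁ m p θ φ) = 0 ∧
    dotProduct (dA₁ m p θ φ) (lamS₂ m p θ φ) = 0 ∧
    dotProduct (dA₂ m p θ φ) (lamS₁ m p θ φ) = 0 ∧
    dotProduct (dA₂ m p θ φ) (lamS₂ m p θ φ) = 0 := by
  have hBm_mul_Bp : Bm m p * Bp m p = m := by rw [mul_comm, Bp_mul_Bm hm]
  simp only [dS₁, dS₂, dA₁, dA₂, lamS₁_eq, lamS₂_eq, lamA₁_eq, lamA₂_eq,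
    smul_vecMul_star_smul_dotProduct, vecMul_star_γ0_dotProduct_elkoSpinor, spinorProduct_self,
    spinorProduct_helicityPlus_helicityMinus, spinorProduct_helicityMinus_helicityPlus,
    Bp_mul_Bm hm, hBm_mul_Bp, star_neg, star_one, star_zero, Complex.star_def, conj_I]
  ring_nf
  simp [I_sq]

/-- Under the Elko dual structure the boosted Elko spinors obey the orthonormality
relations ¬λ^S_α λ^S_α' = 2m δ, ¬λ^A_α λ^A_α' = -2m δ, with all mixed products zero. -/
theorem elko_orthonormality (m p θ φ : ℝ) (hm : 0 < m) (hp : 0 ≤ p) :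
    -- self-conjugate sector
    dotProduct (dS₁ m p θ φ) (lamS₁ m p θ φ) = 2 * (m : ℂ) ∧
    dotProduct (dS₂ m p θ φ) (lamS₂ m p θ φ) = 2 * (m : ℂ) ∧
    dotProduct (dS₁ m p θ φ) (lamS₂ m p θ φ) = 0 ∧
    dotProduct (dS₂ m p θ φ) (lamS₁ m p θ φ) = 0 ∧
    -- anti-self-conjugate sector
    dotProduct (dA₁ m p θ φ) (lamA₁ m p θ φ) = -(2 * (m : ℂ)) ∧
    dotProduct (dA₂ m p θ φ) (lamA₂ m p θ φ) = -(2 * (m : ℂ)) ∧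
    dotProduct (dA₁ m p θ φ) (lamA₂ m p θ φ) = 0 ∧
    dotProduct (dA₂ m p θ φ) (lamA₁ m p θ φ) = 0 ∧
    -- mixed products all vanish
    dotProduct (dS₁ m p θ φ) (lamA₁ m p θ φ) = 0 ∧
    dotProduct (dS₁ m p θ φ) (lamA₂ m p θ φ) = 0 ∧
    dotProduct (dS₂ m p θ φ) (lamA₁ m p θ φ) = 0 ∧
    dotProduct (dS₂ m p θ φ) (lamA₂ m p θ φ) = 0 ∧
    dotProduct (dA₁ m p θ φ) (lamS₁ m p θ φ) = 0 ∧
    dotProduct (dA₁ m p θ φ) (lamS₂ m p θ φ) = 0 ∧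
    dotProduct (dA₂ m p θ φ) (lamS₁ m p θ φ) = 0 ∧
    dotProduct (dA₂ m p θ φ) (lamS₂ m p θ φ) = 0 :=
  elko_orthonormality_general m p θ φ hm
end

section
/- The matrix G(φ) factorizes through the momentum slash and the Ξ operator and is an involution: G(φ) = (1/m) · pslash · Ξ(p), where pslash := E·γ0 + p·sinθ·cosφ·γ1 + p·sinθ·sinφ·γ2 + p·cosθ·γ3, and G(φ)·G(φ) = 1 (the 4×4 identity). -/
open Matrix Complex

/-! In the Weyl representation `pslash` and `m • Ξ(p)` are block anti-diagonal resp. block diagonal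
with entries `E ± p cos θ` and `p sin θ · e^{∓iφ}`. Multiplying them, every entry of the product
either cancels because `e^{iφ} e^{-iφ} = 1`, or carries the factor
`(E + p cos θ)(E - p cos θ) - (p sin θ)² = E² - p² = m²` (the mass shell), leaving `m² • G(φ)`.
`G(φ)` squares to one because `(-i e^{-iφ})(i e^{iφ}) = 1`. -/

section WeylBlocks

variable {R : Type*} [CommRing R]

theorem weyl_slash_mul_xi (i a b s u v : R) (huv : u * v = 1) :
    !![0, 0, a, s * v;
       0, 0, s * u, b;
       b, -(s * v), 0, 0;
       -(s * u), a, 0, 0] *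
    !![i * s, -i * a * v, 0, 0;
       i * b * u, -i * s, 0, 0;
       0, 0, -i * s, -i * b * v;
       0, 0, i * a * u, i * s] =
    (a * b - s ^ 2) • !![0, 0, 0, -i * v;
                         0, 0, i * u, 0;
                         0, -i * v, 0, 0;
                         i * u, 0, 0, 0] := by
  ext r c
  fin_cases r <;> fin_cases c <;>
    simp [Matrix.mul_apply, Fin.sum_univ_succ] <;> grind

theorem antidiag_mul_self_eq_one (i u v : R) (hi : i * i = -1) (huv : u * v = 1) :
    !![0, 0, 0, -i * v;
       0, 0, i * u, 0;
       0, -i * v, 0, 0;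
       i * u, 0, 0, 0] *
    !![0, 0, 0, -i * v;
       0, 0, i * u, 0;
       0, -i * v, 0, 0;
       i * u, 0, 0, 0] = 1 := by
  ext r c
  fin_cases r <;> fin_cases c <;>
    simp [Matrix.mul_apply, Fin.sum_univ_succ] <;> linear_combination (-u * v) * hi + huv

end WeylBlocks

theorem ePf_eq (φ : ℝ) : ePf φ = (Real.cos φ : ℂ) + (Real.sin φ : ℂ) * I := by
  rw [ePf, mul_comm, exp_mul_I, ← ofReal_cos, ← ofReal_sin]

theorem eMf_eq (φ : ℝ) : eMf φ = (Real.cos φ : ℂ) - (Real.sin φ : ℂ) * I := by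
  rw [eMf, ← mul_neg, mul_comm, ← ofReal_neg, exp_mul_I, ← ofReal_cos, ← ofReal_sin, Real.cos_neg,
    Real.sin_neg, ofReal_neg, neg_mul, sub_eq_add_neg]

theorem ePf_mul_eMf (φ : ℝ) : ePf φ * eMf φ = 1 := by
  rw [ePf, eMf, ← exp_add, add_neg_cancel, exp_zero]

theorem pslash_eq (m p θ φ : ℝ) :
    pslash m p θ φ =
      !![0, 0, ((Ee m p + p * Real.cos θ : ℝ) : ℂ), ((p * Real.sin θ : ℝ) : ℂ) * eMf φ;
         0, 0, ((p * Real.sin θ : ℝ) : ℂ) * ePf φ, ((Ee m p - p * Real.cos θ : ℝ) : ℂ);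
         ((Ee m p - p * Real.cos θ : ℝ) : ℂ), -(((p * Real.sin θ : ℝ) : ℂ) * eMf φ), 0, 0;
         -(((p * Real.sin θ : ℝ) : ℂ) * ePf φ), ((Ee m p + p * Real.cos θ : ℝ) : ℂ), 0, 0] := by
  rw [ePf_eq, eMf_eq]
  ext r c
  fin_cases r <;> fin_cases c <;> simp [pslash, γ0, γ1, γ2, γ3] <;> ring

theorem Ee_add_mul_Ee_sub_sub_sq (m p θ : ℝ) :
    (Ee m p + p * Real.cos θ) * (Ee m p - p * Real.cos θ) - (p * Real.sin θ) ^ 2 = m ^ 2 := by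
  have hE : Ee m p ^ 2 = p ^ 2 + m ^ 2 := Real.sq_sqrt (by positivity)
  linear_combination hE - p ^ 2 * Real.sin_sq_add_cos_sq θ

theorem G_factorizes_and_is_involution_general (m p θ φ : ℝ) (hm : 0 < m) :
    Gmat φ = (1/(m : ℂ)) • (pslash m p θ φ * Ξop m p θ φ) ∧
    Gmat φ * Gmat φ = 1 := by
  have hmass : ((Ee m p + p * Real.cos θ : ℝ) : ℂ) * ((Ee m p - p * Real.cos θ : ℝ) : ℂ)
      - ((p * Real.sin θ : ℝ) : ℂ) ^ 2 = (m : ℂ) ^ 2 := by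
    exact_mod_cast Ee_add_mul_Ee_sub_sub_sq m p θ
  have hscalar : 1 / (m : ℂ) * (1 / m) * m ^ 2 = 1 := by
    have : (m : ℂ) ≠ 0 := by exact_mod_cast hm.ne'
    field_simp
  constructor
  · rw [pslash_eq, Ξop, Matrix.mul_smul, weyl_slash_mul_xi _ _ _ _ _ _ (ePf_mul_eMf φ), hmass,
      smul_smul, smul_smul, hscalar, one_smul, Gmat]
  · exact antidiag_mul_self_eq_one _ _ _ I_mul_I (ePf_mul_eMf φ)

/-- G(φ) = (1/m)·pslash·Ξ(p) and G(φ) is an involution. -/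
theorem G_factorizes_and_is_involution (m p θ φ : ℝ) (hm : 0 < m) (hp : 0 ≤ p) :
    Gmat φ = (1/(m : ℂ)) • (pslash m p θ φ * Ξop m p θ φ) ∧
    Gmat φ * Gmat φ = 1 :=
  G_factorizes_and_is_involution_general m p θ φ hm
end
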